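/- Let n be an odd prime, m = (n-1)/2, and R_k = (C(n-1,k) + (-1)^{k+1})/n. Then R_m ≤ R_{m-1} + 1 holds if and only if n ∈ {3, 5, 7}. -/
import Mathlib

lemma pow_lem : ∀ m : ℕ, 5 ≤ m → m * ((2*m+4) * (m+1)) ≤ 4 ^ m := by
  intro m hm
  induction m with
  | zero => omega
  | succ k ih =>
    rcases Nat.lt_or_ge k 5 with h | h
    · have : k = 4 := by omega
      subst this; norm_num
    · have := ih (by omega)
      have step : (k+1) * ((2*(k+1)+4) * (k+1+1)) ≤ 4 * (k * ((2*k+4) * (k+1))) := by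
        nlinarith [Nat.mul_le_mul_right k h, Nat.mul_le_mul_right (k*k) h, h]
      calc (k+1) * ((2*(k+1)+4) * (k+1+1)) ≤ 4 * (k * ((2*k+4) * (k+1))) := step
        _ ≤ 4 * 4 ^ k := Nat.mul_le_mul_left 4 this
        _ = 4 ^ (k+1) := by ring

lemma gap_lem (m : ℕ) (hm : 5 ≤ m) :
    (2*m).choose (m-1) + (2*m+4) ≤ (2*m).choose m := by
  have hid : (2*m).choose m * m = (2*m).choose (m-1) * (m+1) := by
    have := Nat.choose_succ_right_eq (2*m) (m-1)
    have h1 : m - 1 + 1 = m := by omega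
    have h2 : 2*m - (m-1) = m + 1 := by omega
    rw [h1, h2] at this
    omega
  have hcb : 4 ^ m < m * (2*m).choose m := by
    have := Nat.four_pow_lt_mul_centralBinom m (by omega)
    simpa [Nat.centralBinom] using this
  have hlb : (2*m+4) * (m+1) ≤ (2*m).choose m := by
    have h := pow_lem m hm
    have : m * ((2*m+4) * (m+1)) < m * (2*m).choose m := lt_of_le_of_lt h hcb
    exact le_of_lt (Nat.lt_of_mul_lt_mul_left this)
  have key : ((2*m).choose (m-1) + (2*m+4)) * (m+1) ≤ (2*m).choose m * (m+1) := by
    nlinarith [hid, hlb]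
  exact Nat.le_of_mul_le_mul_right key (by omega)

theorem stmt_10 (n m : ℕ) (hn : n.Prime) (hodd : Odd n) (hm : m = (n - 1) / 2)
    (Rm Rm1 : ℤ)
    (hRm : (n : ℤ) * Rm = ((n - 1).choose m : ℤ) + (-1) ^ (m + 1))
    (hRm1 : (n : ℤ) * Rm1 = ((n - 1).choose (m - 1) : ℤ) + (-1) ^ m) :
    Rm ≤ Rm1 + 1 ↔ n = 3 ∨ n = 5 ∨ n = 7 := by
  have hn2 : 2 ≤ n := hn.two_le
  have hnodd : n % 2 = 1 := Nat.odd_iff.mp hodd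
  rcases Nat.lt_or_ge n 11 with hsmall | hbig
  · -- n ∈ {3,5,7} (odd prime < 11; 9 not prime)
    have : n = 3 ∨ n = 5 ∨ n = 7 := by
      interval_cases n <;> simp_all <;> norm_num at hn
    rcases this with rfl | rfl | rfl
    · subst hm; norm_num [Nat.choose] at hRm hRm1 ⊢; omega
    · subst hm; norm_num [Nat.choose] at hRm hRm1 ⊢; omega
    · subst hm; norm_num [Nat.choose] at hRm hRm1 ⊢; omega
  · have hne : ¬ (n = 3 ∨ n = 5 ∨ n = 7) := by omega
    simp only [hne, iff_false]
    -- n = 2m+1, m ≥ 5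
    have hn2m : n = 2 * m + 1 := by omega
    have hm5 : 5 ≤ m := by omega
    have hn1 : n - 1 = 2 * m := by omega
    rw [hn1] at hRm hRm1
    have hgap := gap_lem m hm5
    have hgapZ : ((2*m).choose (m-1) : ℤ) + (2*m+4) ≤ ((2*m).choose m : ℤ) := by
      exact_mod_cast hgap
    intro hle
    have hmul : (n : ℤ) * Rm ≤ (n : ℤ) * Rm1 + n := by
      have : (n:ℤ) * Rm ≤ (n:ℤ) * (Rm1 + 1) := by
        apply mul_le_mul_of_nonneg_left hle (by positivity)
      linarith
    have hsign : ((-1:ℤ)^(m+1) - (-1:ℤ)^m) ≥ -2 := by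
      rcases Nat.even_or_odd m with he | ho
      · simp [he.neg_one_pow, (he.add_one).neg_one_pow]
      · simp [ho.neg_one_pow, (ho.add_one).neg_one_pow]
    have hnZ : (n : ℤ) = 2*m+1 := by exact_mod_cast congrArg (Nat.cast : ℕ → ℤ) hn2m
    rw [hRm, hRm1] at hmul
    push_cast at hgapZ hmul hnZ
    linarith
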